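/- (Strict Lyapunov inequality forces positive definiteness.) Let A ∈ ℝ^{n×n} be Hurwitz and let X ∈ ℝ^{n×n} be symmetric. If AᵀX + XA ≺ 0 (i.e., −(AᵀX + XA) is positive definite), then X is positive definite. -/

import Mathlib

open Matrix MeasureTheory

/-- A real square matrix is Hurwitz if every eigenvalue of its complexification
has strictly negative real part. -/
def IsHurwitz {n : ℕ} (A : Matrix (Fin n) (Fin n) ℝ) : Prop :=
  ∀ μ ∈ spectrum ℂ (A.map (algebraMap ℝ ℂ)), μ.re < 0

/-- Closed-loop trajectory `x(t) = exp (t Acl) x0`. -/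
noncomputable def traj {n : ℕ} (Acl : Matrix (Fin n) (Fin n) ℝ) (x0 : Fin n → ℝ) (t : ℝ) :
    Fin n → ℝ :=
  NormedSpace.exp (t • Acl) *ᵥ x0

/-- Quadratic cost `∫₀^∞ x(t)ᵀ M x(t) dt` along the trajectory of `Acl` from `x0`. -/
noncomputable def costJ {n : ℕ} (Acl M : Matrix (Fin n) (Fin n) ℝ) (x0 : Fin n → ℝ) : ℝ :=
  ∫ t in Set.Ioi (0 : ℝ), traj Acl x0 t ⬝ᵥ (M *ᵥ traj Acl x0 t)

/-- Euclidean norm on `Fin n → ℝ`. -/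
noncomputable def euclNorm {n : ℕ} (x : Fin n → ℝ) : ℝ :=
  Real.sqrt (∑ i, x i ^ 2)

/-- The selector matrix `G i = [0 … I_{m_i} … 0]` picking out player `i`'s rows.
The total input index set is the sigma type `(j : Fin N) × Fin (mdim j)`,
a faithful model of `Fin (m₁ + ⋯ + m_N)`. -/
def selG {N : ℕ} (mdim : Fin N → ℕ) (i : Fin N) :
    Matrix (Fin (mdim i)) ((j : Fin N) × Fin (mdim j)) ℝ :=
  Matrix.of fun k l => if l = ⟨i, k⟩ then 1 else 0

/-- Structural constraint SC2: `Gᵢ F (I − Cᵢᵀ(CᵢCᵢᵀ)⁻¹Cᵢ) = 0` for every player `i`. -/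
def SC2 {n N : ℕ} {mdim sdim : Fin N → ℕ}
    (C : (i : Fin N) → Matrix (Fin (sdim i)) (Fin n) ℝ)
    (F : Matrix ((j : Fin N) × Fin (mdim j)) (Fin n) ℝ) : Prop :=
  ∀ i, selG mdim i * F * (1 - (C i)ᵀ * (C i * (C i)ᵀ)⁻¹ * C i) = 0

section StrictLyapunov

open Filter

attribute [local instance] Matrix.linftyOpNormedAddCommGroup Matrix.linftyOpNormedRing
  Matrix.linftyOpNormedAlgebra

-- coefficient decay
lemma coeff_decay (μ : ℂ) (hμ : μ.re < 0) (k : ℕ) :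
    Tendsto (fun t : ℝ => Complex.exp (t * μ) * ((k.factorial : ℂ)⁻¹ * (t:ℂ) ^ k))
      atTop (nhds 0) := by
  rw [tendsto_zero_iff_norm_tendsto_zero]
  have h1 : Tendsto (fun t : ℝ => ((-μ.re) * t) ^ k * Real.exp (-((-μ.re) * t))) atTop (nhds 0) :=
    (Real.tendsto_pow_mul_exp_neg_atTop_nhds_zero k).comp
      (tendsto_id.const_mul_atTop (by linarith))
  have h2 : Tendsto (fun t : ℝ => ((-μ.re) ^ k)⁻¹ * (((-μ.re) * t) ^ k * Real.exp (-((-μ.re) * t))) * (k.factorial : ℝ)⁻¹)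
      atTop (nhds 0) := by
    simpa using (h1.const_mul (((-μ.re) ^ k)⁻¹)).mul_const ((k.factorial : ℝ)⁻¹)
  apply h2.congr'
  filter_upwards [eventually_ge_atTop (0:ℝ)] with t ht
  have hre : (-μ.re) ≠ 0 := by linarith
  have : ((-μ.re) * t) ^ k = (-μ.re) ^ k * t ^ k := by ring
  rw [this]
  have hexp : Real.exp (-(-μ.re * t)) = Real.exp (t * μ.re) := by ring_nf
  rw [hexp]
  have hnorm : ‖Complex.exp (↑t * μ) * ((k.factorial : ℂ)⁻¹ * (t:ℂ) ^ k)‖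
      = Real.exp (t * μ.re) * ((k.factorial : ℝ)⁻¹ * t ^ k) := by
    rw [norm_mul, norm_mul, Complex.norm_exp]
    simp [Complex.mul_re, abs_of_nonneg ht]
  rw [hnorm]
  field_simp

lemma decay_complex {n : ℕ} (B : Matrix (Fin n) (Fin n) ℂ)
    (hB : ∀ μ ∈ spectrum ℂ B, μ.re < 0) (v : Fin n → ℂ) :
    Tendsto (fun t : ℝ => NormedSpace.exp ((t : ℂ) • B) *ᵥ v) atTop (nhds 0) := by
  classical
  set f : Module.End ℂ (Fin n → ℂ) := Matrix.toLinAlgEquiv' B with hf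
  have htop : v ∈ ⨆ μ : ℂ, f.maxGenEigenspace μ := by
    rw [Module.End.iSup_maxGenEigenspace_eq_top f]; trivial
  refine Submodule.iSup_induction (motive := fun w =>
      Tendsto (fun t : ℝ => NormedSpace.exp ((t : ℂ) • B) *ᵥ w) atTop (nhds 0))
      _ htop ?_ ?_ ?_
  · -- each generalized eigenspace
    intro μ w hw
    rcases eq_or_ne w 0 with rfl | hw0
    · simpa [Matrix.mulVec_zero] using tendsto_const_nhds
    obtain ⟨K, hK⟩ := (Module.End.mem_maxGenEigenspace f μ w).mp hw
    -- μ is in the spectrum of B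
    have hμ : μ.re < 0 := by
      apply hB
      have hspec : μ ∈ spectrum ℂ f := by
        rw [spectrum.mem_iff]
        intro hu
        have hu' : IsUnit ((algebraMap ℂ (Module.End ℂ (Fin n → ℂ)) μ - f) ^ K) := hu.pow K
        have hker : ((algebraMap ℂ (Module.End ℂ (Fin n → ℂ)) μ - f) ^ K) w = 0 := by
          have halg : (algebraMap ℂ (Module.End ℂ (Fin n → ℂ))) μ = μ • 1 :=
            Algebra.algebraMap_eq_smul_one μ
          have : (algebraMap ℂ (Module.End ℂ (Fin n → ℂ)) μ - f) ^ K
              = (-1 : ℂ) ^ K • (f - μ • 1) ^ K := by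
            rw [halg, ← neg_sub, ← neg_one_smul ℂ (f - μ • 1), smul_pow]
          rw [this]
          simp [hK]
        have hinj : Function.Injective ((algebraMap ℂ (Module.End ℂ (Fin n → ℂ)) μ - f) ^ K) :=
          ((Module.End.isUnit_iff _).mp hu').injective
        exact hw0 (hinj (by simp [hker]))
      rwa [AlgEquiv.spectrum_eq Matrix.toLinAlgEquiv' B] at hspec
    -- nilpotent part
    set N : Matrix (Fin n) (Fin n) ℂ := B - μ • 1 with hN
    have hNw : N ^ K *ᵥ w = 0 := by
      have heq : (f - μ • 1) ^ K = Matrix.toLinAlgEquiv' (N ^ K) := by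
        rw [map_pow, map_sub, _root_.map_smul, _root_.map_one]
      have h2 : (Matrix.toLinAlgEquiv' (N ^ K)) w = 0 := by rw [← heq]; exact hK
      simpa only [Matrix.toLinAlgEquiv'_apply] using h2
    -- expand the exponential
    have hexp : ∀ t : ℝ, NormedSpace.exp ((t : ℂ) • B) *ᵥ w
        = ∑ k ∈ Finset.range K,
            (Complex.exp (t * μ) * ((k.factorial : ℂ)⁻¹ * (t:ℂ) ^ k)) • (N ^ k *ᵥ w) := by
      intro t
      have hsplit : (t : ℂ) • B = algebraMap ℂ (Matrix (Fin n) (Fin n) ℂ) ((t:ℂ) * μ)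
          + (t : ℂ) • N := by
        simp [hN, Algebra.algebraMap_eq_smul_one, smul_sub, smul_smul]
      have hcomm : Commute (algebraMap ℂ (Matrix (Fin n) (Fin n) ℂ) ((t:ℂ) * μ)) ((t:ℂ) • N) :=
        (Algebra.commutes _ _)
      rw [hsplit]; erw [NormedSpace.exp_add_of_commute hcomm, ← NormedSpace.algebraMap_exp_comm]
      -- L : mulVec by w as a continuous linear map in the matrix argument
      let L : Matrix (Fin n) (Fin n) ℂ →ₗ[ℂ] (Fin n → ℂ) :=
        { toFun := fun M => M *ᵥ w
          map_add' := fun M₁ M₂ => Matrix.add_mulVec M₁ M₂ w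
          map_smul' := fun c M => Matrix.smul_mulVec c M w }
      let Lc : Matrix (Fin n) (Fin n) ℂ →L[ℂ] (Fin n → ℂ) := LinearMap.toContinuousLinearMap L
      have hsum : Summable fun k : ℕ => ((k.factorial : ℂ)⁻¹) • ((t:ℂ) • N) ^ k :=
        NormedSpace.expSeries_summable' ((t:ℂ) • N)
      have hexpN : NormedSpace.exp ((t:ℂ) • N) *ᵥ w
          = ∑' k : ℕ, ((k.factorial : ℂ)⁻¹ * (t:ℂ) ^ k) • (N ^ k *ᵥ w) := by
        have h := Lc.map_tsum hsum
        rw [NormedSpace.exp_eq_tsum ℂ]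
        show Lc (∑' k : ℕ, ((k.factorial : ℂ)⁻¹) • ((t:ℂ) • N) ^ k) = _
        rw [h]
        congr 1
        funext k
        show (((k.factorial : ℂ)⁻¹) • ((t:ℂ) • N) ^ k) *ᵥ w = _
        rw [smul_pow, smul_smul, Matrix.smul_mulVec]
      have hvanish : ∀ k ∉ Finset.range K,
          ((k.factorial : ℂ)⁻¹ * (t:ℂ) ^ k) • (N ^ k *ᵥ w) = 0 := by
        intro k hk
        rw [Finset.mem_range, not_lt] at hk
        have hz : N ^ k *ᵥ w = 0 := by
          have : N ^ k = N ^ (k - K) * N ^ K := by rw [← pow_add]; congr 1; omega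
          rw [this, ← Matrix.mulVec_mulVec, hNw, Matrix.mulVec_zero]
        simp [hz]
      erw [← Algebra.smul_def, Matrix.smul_mulVec, hexpN, tsum_eq_sum hvanish,
        Finset.smul_sum]
      congr 1
      funext k
      rw [smul_smul, Complex.exp_eq_exp_ℂ]
    simp only [hexp]
    have hzero : (0 : Fin n → ℂ) = ∑ k ∈ Finset.range K, (0 : Fin n → ℂ) := by simp
    rw [hzero]
    refine tendsto_finset_sum _ fun k _ => ?_
    simpa using (coeff_decay μ hμ k).smul_const (N ^ k *ᵥ w)
  · simpa [Matrix.mulVec_zero] using tendsto_const_nhds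
  · intro x y hx hy
    simpa [Matrix.mulVec_add] using hx.add hy

lemma exp_map_complex {n : ℕ} (A : Matrix (Fin n) (Fin n) ℝ) (t : ℝ) :
    (NormedSpace.exp (t • A)).map (algebraMap ℝ ℂ)
      = NormedSpace.exp ((t : ℂ) • A.map (algebraMap ℝ ℂ)) := by
  classical
  let φ : Matrix (Fin n) (Fin n) ℝ →+* Matrix (Fin n) (Fin n) ℂ :=
    (algebraMap ℝ ℂ).mapMatrix
  have hφ : Continuous φ := by
    apply continuous_matrix
    intro i j
    exact Complex.continuous_ofReal.comp ((continuous_apply j).comp (continuous_apply i))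
  have h1 : φ (NormedSpace.exp (t • A)) = NormedSpace.exp (φ (t • A)) :=
    NormedSpace.map_exp φ hφ (t • A)
  have h2 : φ (t • A) = (t : ℂ) • A.map (algebraMap ℝ ℂ) := by
    ext i j
    simp [φ, RingHom.mapMatrix_apply, Matrix.map_apply, Complex.ofReal_mul]
  have h3 : (NormedSpace.exp : Matrix (Fin n) (Fin n) ℂ → Matrix (Fin n) (Fin n) ℂ)
      = NormedSpace.exp := rfl
  calc (NormedSpace.exp (t • A)).map (algebraMap ℝ ℂ)
      = φ (NormedSpace.exp (t • A)) := rfl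
    _ = NormedSpace.exp (φ (t • A)) := h1
    _ = NormedSpace.exp ((t : ℂ) • A.map (algebraMap ℝ ℂ)) := by rw [h2, h3]

lemma traj_tendsto_zero {n : ℕ} (A : Matrix (Fin n) (Fin n) ℝ) (hA : ∀ μ ∈ spectrum ℂ (A.map (algebraMap ℝ ℂ)), μ.re < 0)
    (v : Fin n → ℝ) :
    Tendsto (fun t : ℝ => NormedSpace.exp (t • A) *ᵥ v) atTop (nhds 0) := by
  classical
  set B := A.map (algebraMap ℝ ℂ)
  have hdecay := decay_complex B hA (fun j => (v j : ℂ))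
  rw [tendsto_pi_nhds] at hdecay ⊢
  intro i
  have hcomp : ∀ t : ℝ, ((NormedSpace.exp (t • A) *ᵥ v) i : ℂ)
      = (NormedSpace.exp ((t : ℂ) • B) *ᵥ fun j => (v j : ℂ)) i := by
    intro t
    rw [← exp_map_complex]
    simp [Matrix.mulVec, dotProduct, Matrix.map_apply]
  have := (Complex.continuous_re.tendsto 0).comp (hdecay i)
  simp only [Function.comp_def] at this
  have h0 : (0 : ℂ).re = 0 := rfl
  rw [h0] at this
  apply this.congr
  intro t
  rw [← hcomp t]
  simp

lemma dot_identity {n : ℕ} (A X : Matrix (Fin n) (Fin n) ℝ) (y : Fin n → ℝ) :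
    (A *ᵥ y) ⬝ᵥ (X *ᵥ y) + y ⬝ᵥ (X *ᵥ (A *ᵥ y)) = y ⬝ᵥ ((Aᵀ * X + X * A) *ᵥ y) := by
  rw [Matrix.add_mulVec, dotProduct_add, ← Matrix.mulVec_mulVec y Aᵀ X,
    ← Matrix.mulVec_mulVec y X A, Matrix.dotProduct_mulVec y Aᵀ, Matrix.vecMul_transpose]

theorem main {n : ℕ} (A X : Matrix (Fin n) (Fin n) ℝ)
    (hA : ∀ μ ∈ spectrum ℂ (A.map (algebraMap ℝ ℂ)), μ.re < 0) (hX : X.IsSymm)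
    (hLyap : (-(Aᵀ * X + X * A)).PosDef) :
    X.PosDef := by
  classical
  refine posDef_iff_dotProduct_mulVec.mpr ⟨?_, ?_⟩
  · have hXH : Xᴴ = Xᵀ := by ext i j; simp [Matrix.conjTranspose_apply]
    rw [Matrix.IsHermitian, hXH]; exact hX
  intro v hv
  set x : ℝ → (Fin n → ℝ) := fun t => NormedSpace.exp (t • A) *ᵥ v with hxdef
  have hx0 : x 0 = v := by
    simp [hxdef, NormedSpace.exp_zero, Matrix.one_mulVec]
  have hxne : ∀ t, x t ≠ 0 := by
    intro t h0
    apply hv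
    have hunit : NormedSpace.exp (-(t • A)) * NormedSpace.exp (t • A) = 1 := by
      erw [← NormedSpace.exp_add_of_commute (Commute.refl (t • A)).neg_left,
        neg_add_cancel, NormedSpace.exp_zero]
    have h1 := congrArg (fun y => NormedSpace.exp (-(t • A)) *ᵥ y) h0
    simpa [hxdef, Matrix.mulVec_mulVec, hunit, Matrix.one_mulVec, Matrix.mulVec_zero] using h1
  -- derivative of x
  let Lv : Matrix (Fin n) (Fin n) ℝ →ₗ[ℝ] (Fin n → ℝ) :=
    { toFun := fun M => M *ᵥ v
      map_add' := fun M₁ M₂ => Matrix.add_mulVec M₁ M₂ v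
      map_smul' := fun c M => Matrix.smul_mulVec c M v }
  let Lc : Matrix (Fin n) (Fin n) ℝ →L[ℝ] (Fin n → ℝ) := LinearMap.toContinuousLinearMap Lv
  have hL : ∀ t, HasDerivAt x (A *ᵥ x t) t := by
    intro t
    have h2 := Lc.hasFDerivAt.comp_hasDerivAt t (hasDerivAt_exp_smul_const' A t)
    have h3 : Lc (A * NormedSpace.exp (t • A)) = A *ᵥ x t := by
      show (A * NormedSpace.exp (t • A)) *ᵥ v = A *ᵥ x t
      rw [← Matrix.mulVec_mulVec]
    erw [h3] at h2
    exact h2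
  have hxd : ∀ t i, HasDerivAt (fun s => x s i) ((A *ᵥ x t) i) t := fun t i =>
    hasDerivAt_pi.mp (hL t) i
  set g : ℝ → ℝ := fun t => x t ⬝ᵥ (X *ᵥ x t) with hgdef
  have hgeq : g = fun s => ∑ i, x s i * ∑ j, X i j * x s j := by
    funext s; simp [hgdef, dotProduct, Matrix.mulVec]
  have hg : ∀ t, HasDerivAt g (-(x t ⬝ᵥ ((-(Aᵀ * X + X * A)) *ᵥ x t))) t := by
    intro t
    have hsum : HasDerivAt (fun s => ∑ i, x s i * ∑ j, X i j * x s j)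
        (∑ i, ((A *ᵥ x t) i * ∑ j, X i j * x t j
          + x t i * ∑ j, X i j * (A *ᵥ x t) j)) t := by
      apply HasDerivAt.fun_sum
      intro i _
      exact (hxd t i).mul (HasDerivAt.fun_sum fun j _ => (hxd t j).const_mul (X i j))
    rw [hgeq]
    convert hsum using 1
    have hL1 : ∑ i, ((A *ᵥ x t) i * ∑ j, X i j * x t j + x t i * ∑ j, X i j * (A *ᵥ x t) j)
        = (A *ᵥ x t) ⬝ᵥ (X *ᵥ x t) + x t ⬝ᵥ (X *ᵥ (A *ᵥ x t)) := by
      simp [dotProduct, Matrix.mulVec, Finset.sum_add_distrib]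
    rw [hL1, dot_identity]
    simp only [Matrix.neg_mulVec, Matrix.add_mulVec, dotProduct_add,
      dotProduct_neg, neg_add, neg_neg]
  have hQpos : ∀ t, 0 < x t ⬝ᵥ ((-(Aᵀ * X + X * A)) *ᵥ x t) := by
    intro t
    have := hLyap.dotProduct_mulVec_pos (hxne t)
    simpa using this
  have hanti : StrictAnti g :=
    strictAnti_of_hasDerivAt_neg hg fun t => neg_lt_zero.mpr (hQpos t)
  have htend : Tendsto g atTop (nhds 0) := by
    have hxt := traj_tendsto_zero A hA v
    have hcont : Continuous fun y : Fin n → ℝ => y ⬝ᵥ (X *ᵥ y) := by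
      simp only [dotProduct, Matrix.mulVec]
      exact continuous_finset_sum _ fun i _ => (continuous_apply i).mul
        (continuous_finset_sum _ fun j _ => continuous_const.mul (continuous_apply j))
    have h := (hcont.tendsto 0).comp hxt
    simp only [Function.comp_def] at h
    have h00 : (0 : Fin n → ℝ) ⬝ᵥ (X *ᵥ (0 : Fin n → ℝ)) = 0 := by simp
    rw [h00] at h
    exact h
  have hg1 : 0 ≤ g 1 :=
    le_of_tendsto htend (eventually_atTop.2 ⟨1, fun t ht => hanti.antitone ht⟩)
  have hg0 : g 1 < g 0 := hanti zero_lt_one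
  have : 0 < g 0 := lt_of_le_of_lt hg1 hg0
  rw [hgdef] at this
  simp only [hx0] at this
  simpa using this

/-- for Hurwitz `A` and symmetric `X`, the strict Lyapunov inequality
`AᵀX + XA ≺ 0` forces `X ≻ 0`. -/
theorem strict_lyapunov_posdef
    {n : ℕ} (A X : Matrix (Fin n) (Fin n) ℝ)
    (hA : IsHurwitz A) (hX : X.IsSymm)
    (hLyap : (-(Aᵀ * X + X * A)).PosDef) :
    X.PosDef := by
  exact main A X hA hX hLyap

end StrictLyapunov
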